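/- Let N = (V,A) be a tree-based rooted phylogenetic network, and let A' be a subset of A. Then A' is the arc set of a support tree for N if and only if A' is the union of the set of arboreal arcs of N with a supporting set for the bipartite graph J_N. -/

import Mathlib

open Relation

/-- Out-degree of a vertex in a digraph given by its arc relation. -/
noncomputable def outDeg {V : Type*} (A : V → V → Prop) (v : V) : ℕ := {u | A v u}.ncard
/-- In-degree of a vertex in a digraph given by its arc relation. -/
noncomputable def inDeg {V : Type*} (A : V → V → Prop) (v : V) : ℕ := {u | A u v}.ncard

/-- A rooted phylogenetic network on leaf set `X`. -/
structure PhyloNet (V : Type*) [Fintype V] [DecidableEq V] where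
  Arc : V → V → Prop
  root : V
  X : Finset V
  acyclic : ∀ v, ¬ Relation.TransGen Arc v v
  reach : ∀ v, Relation.ReflTransGen Arc root v
  root_out : 1 ≤ outDeg Arc root
  leaf_iff : ∀ v, v ∈ X ↔ outDeg Arc v = 0
  leaf_in : ∀ v ∈ X, inDeg Arc v = 1
  internal : ∀ v, v ≠ root → v ∉ X →
    (inDeg Arc v = 1 ∧ 2 ≤ outDeg Arc v) ∨ (2 ≤ inDeg Arc v ∧ outDeg Arc v = 1)

section Defs
variable {V : Type*} [Fintype V] [DecidableEq V]

/-- A reticulation: in-degree at least two. -/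
def IsRetic (N : PhyloNet V) (v : V) : Prop := 2 ≤ inDeg N.Arc v
/-- A tree vertex: a non-leaf vertex of in-degree at most one. -/
def IsTreeVert (N : PhyloNet V) (v : V) : Prop := v ∉ N.X ∧ inDeg N.Arc v ≤ 1
/-- An omnian: a non-leaf vertex all of whose children are reticulations. -/
def IsOmnian (N : PhyloNet V) (v : V) : Prop := v ∉ N.X ∧ ∀ u, N.Arc v u → IsRetic N u
/-- A binary network: all in- and out-degrees are at most two. -/
def IsBinary (N : PhyloNet V) : Prop := ∀ v : V, inDeg N.Arc v ≤ 2 ∧ outDeg N.Arc v ≤ 2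

/-- A rooted spanning tree of `N` with the same root as `N`. -/
def IsRSTree (N : PhyloNet V) (T : V → V → Prop) : Prop :=
  (∀ u v, T u v → N.Arc u v) ∧ (∀ v, inDeg T v = 0 ↔ v = N.root) ∧
  (∀ v, v ≠ N.root → inDeg T v = 1)

/-- A support tree: a rooted spanning tree with the same root, all of whose leaves are in `X`. -/
def IsSupportTree (N : PhyloNet V) (T : V → V → Prop) : Prop :=
  IsRSTree N T ∧ ∀ v, outDeg T v = 0 → v ∈ N.X

/-- Tree-based network. -/
def TreeBased (N : PhyloNet V) : Prop := ∃ T, IsSupportTree N T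

/-- A (nonempty, repetition-free) directed path recorded as a list of vertices. -/
def IsPathIn (A : V → V → Prop) (p : List V) : Prop := p ≠ [] ∧ p.Chain' A ∧ p.Nodup
/-- The path ends at a vertex of `X`. -/
def EndsIn (X : Finset V) (p : List V) : Prop := ∃ x ∈ X, p.getLast? = some x
/-- Pairwise vertex-disjoint family of paths. -/
def PairwiseDisj (P : Finset (List V)) : Prop :=
  ∀ p ∈ P, ∀ q ∈ P, p ≠ q → ∀ v : V, v ∈ p → v ∉ q
/-- A partition of the vertex set of `N` into vertex-disjoint directed paths
ending at leaves in `X`. -/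
def IsPathPartition (N : PhyloNet V) (P : Finset (List V)) : Prop :=
  (∀ p ∈ P, IsPathIn N.Arc p ∧ EndsIn N.X p) ∧ PairwiseDisj P ∧ ∀ v : V, ∃ p ∈ P, v ∈ p

/-- A matching in the bipartite graph with edge set `E` (edges from a first copy of `V`
to a second copy of `V`), recorded as a set of edges no two of which share an endpoint. -/
def IsMatchingOn (E : V → V → Prop) (M : Finset (V × V)) : Prop :=
  (∀ e ∈ M, E e.1 e.2) ∧ ∀ e ∈ M, ∀ f ∈ M, (e.1 = f.1 ∨ e.2 = f.2) → e = f

/-- Size of a maximum matching of the bipartite graph with edge set `E`. -/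
noncomputable def maxMatching (E : V → V → Prop) : ℕ :=
  sSup {n | ∃ M : Finset (V × V), IsMatchingOn E M ∧ M.card = n}

/-- An antichain of vertices of `N`. -/
def AntichainIn (N : PhyloNet V) (S : Finset V) : Prop :=
  ∀ u ∈ S, ∀ v ∈ S, u ≠ v → ¬ Relation.TransGen N.Arc u v

/-- The antichain-to-leaf property: from every antichain there are pairwise
vertex-disjoint directed paths to leaves, one starting at each antichain element. -/
def AntichainToLeaf (N : PhyloNet V) : Prop :=
  ∀ S : Finset V, AntichainIn N S →
    ∃ f : V → List V,
      (∀ s ∈ S, IsPathIn N.Arc (f s) ∧ (f s).head? = some s ∧ EndsIn N.X (f s)) ∧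
      ∀ s ∈ S, ∀ t ∈ S, s ≠ t → ∀ v : V, v ∈ f s → v ∉ f t

/-- A temporal network: a real labelling strictly increasing along tree arcs and
constant along reticulation arcs. -/
def Temporal (N : PhyloNet V) : Prop :=
  ∃ l : V → ℝ, ∀ u v, N.Arc u v →
    (IsRetic N v → l u = l v) ∧ (¬ IsRetic N v → l u < l v)

/-- `N'` is a binary refinement of `N`, witnessed by the contraction map `φ`:
`N` is obtained from the binary network `N'` by contracting the arcs whose endpoints
are identified by `φ`. -/
def IsBinRefinement {V' : Type*} [Fintype V'] [DecidableEq V']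
    (N' : PhyloNet V') (N : PhyloNet V) (φ : V' → V) : Prop :=
  IsBinary N' ∧ Function.Surjective φ ∧ φ N'.root = N.root ∧
  N'.X.image φ = N.X ∧ Set.InjOn φ ↑N'.X ∧
  (∀ u v : V, N.Arc u v ↔ ∃ u' v', φ u' = u ∧ φ v' = v ∧ N'.Arc u' v' ∧ φ u' ≠ φ v') ∧
  (∀ a b : V', φ a = φ b →
    Relation.ReflTransGen (fun x y => (N'.Arc x y ∨ N'.Arc y x) ∧ φ x = φ y) a b)

/-- Edge of the bipartite graph `B_N` between omnians and reticulations. -/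
def BEdge (N : PhyloNet V) (o r : V) : Prop := IsOmnian N o ∧ IsRetic N r ∧ N.Arc o r
/-- Edge of the bipartite graph `Z_N` between tree vertices with a reticulation child
and reticulations. -/
def ZEdge (N : PhyloNet V) (t r : V) : Prop :=
  IsTreeVert N t ∧ (∃ r', N.Arc t r' ∧ IsRetic N r') ∧ IsRetic N r ∧ N.Arc t r

/-- `R_t`: reticulations with no reticulation parent. -/
def Rt (N : PhyloNet V) (v : V) : Prop := IsRetic N v ∧ ∀ u, N.Arc u v → ¬ IsRetic N u
/-- `Q_t`: vertices with a child in `R_t`. -/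
def Qt (N : PhyloNet V) (v : V) : Prop := ∃ r, N.Arc v r ∧ Rt N r
/-- Edge of the bipartite graph `J_N`. -/
def JEdge (N : PhyloNet V) (q r : V) : Prop := Qt N q ∧ Rt N r ∧ N.Arc q r

/-- A supporting set for `J_N`. -/
def IsSupportingSet (N : PhyloNet V) (E : Finset (V × V)) : Prop :=
  (∀ e ∈ E, JEdge N e.1 e.2) ∧
  (∀ q, Qt N q → IsOmnian N q → ∃ e ∈ E, e.1 = q) ∧
  (∀ r, Rt N r → ∃! e : V × V, e ∈ E ∧ e.2 = r)

/-- An arboreal arc: `u` is a reticulation, or `v` is a tree vertex or a leaf. -/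
def ArborealArc (N : PhyloNet V) (u v : V) : Prop :=
  N.Arc u v ∧ (IsRetic N u ∨ ¬ IsRetic N v)

/-- The number of support trees of `N`, identified with their arc sets. -/
noncomputable def supCount (N : PhyloNet V) : ℕ :=
  {A' : Finset (V × V) | IsSupportTree N (fun u v => (u, v) ∈ A')}.ncard

/-- The bipartite graph `J_N`, as a simple graph on `Q_t ∪ R_t`. -/
def Jgraph (N : PhyloNet V) : SimpleGraph {v : V // Qt N v ∨ Rt N v} where
  Adj a b := JEdge N a.1 b.1 ∨ JEdge N b.1 a.1
  symm := ⟨by intro a b h; tauto⟩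
  loopless :=
    ⟨by rintro a (⟨_, _, h⟩ | ⟨_, _, h⟩) <;> exact N.acyclic _ (Relation.TransGen.single h)⟩

/-- Degree in `J_N`. -/
noncomputable def Jdeg (N : PhyloNet V) (a : {v : V // Qt N v ∨ Rt N v}) : ℕ :=
  ((Jgraph N).neighborSet a).ncard

end Defs

/-- A rooted tree (equivalently, a subdivision of a rooted tree): a rooted digraph
in which every non-root vertex has in-degree one and everything is reachable
from the root. -/
structure RootedDirTree (V : Type*) [Fintype V] [DecidableEq V] where
  Arc : V → V → Prop
  root : V
  acyclic : ∀ v, ¬ Relation.TransGen Arc v v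
  reach : ∀ v, Relation.ReflTransGen Arc root v
  root_in : inDeg Arc root = 0
  in_one : ∀ v, v ≠ root → inDeg Arc v = 1

/-!
Every arc of `N` is forced into a support tree `T` except those entering a reticulation from a
non-reticulation: a vertex of in-degree one keeps its only parent, and a reticulation (out-degree
one, not a leaf) keeps its only child. In a tree-based network a reticulation has at most one
reticulation parent, so only the parents of the reticulations in `R_t` remain to be chosen, one
for each; `T` then has no spurious leaves exactly when every omnian keeps a child, which is the
covering condition of a supporting set.
-/

section Degree
variable {V : Type*} {T : V → V → Prop} {v : V}

lemma inDeg_eq_one_iff : inDeg T v = 1 ↔ ∃! u, T u v := by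
  simp only [inDeg, Set.ncard_eq_one, Set.eq_singleton_iff_unique_mem]
  rfl

lemma outDeg_eq_one_iff : outDeg T v = 1 ↔ ∃! u, T v u := by
  simp only [outDeg, Set.ncard_eq_one, Set.eq_singleton_iff_unique_mem]
  rfl

lemma inDeg_eq_zero_iff [Finite V] : inDeg T v = 0 ↔ ∀ u, ¬ T u v := by
  rw [inDeg, Set.ncard_eq_zero, Set.eq_empty_iff_forall_notMem]
  rfl

lemma outDeg_eq_zero_iff [Finite V] : outDeg T v = 0 ↔ ∀ u, ¬ T v u := by
  rw [outDeg, Set.ncard_eq_zero, Set.eq_empty_iff_forall_notMem]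
  rfl

end Degree

section Network
variable {V : Type*} [Fintype V] [DecidableEq V] {N : PhyloNet V} {u v : V}

namespace PhyloNet

lemma not_arc_root (N : PhyloNet V) (u : V) : ¬ N.Arc u N.root := fun h =>
  N.acyclic N.root (Relation.TransGen.tail' (N.reach u) h)

lemma ne_root_of_arc (h : N.Arc u v) : v ≠ N.root := by
  rintro rfl
  exact N.not_arc_root u h

lemma exists_arc_of_notMem_X (hv : v ∉ N.X) : ∃ c, N.Arc v c := by
  by_contra! h
  exact hv ((N.leaf_iff v).2 (outDeg_eq_zero_iff.2 h))

lemma inDeg_eq_one_of_not_isRetic (hv : v ≠ N.root) (hr : ¬ IsRetic N v) :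
    inDeg N.Arc v = 1 := by
  by_cases hx : v ∈ N.X
  · exact N.leaf_in v hx
  · rcases N.internal v hv hx with ⟨h, _⟩ | ⟨h, _⟩
    · exact h
    · exact absurd h hr

lemma eq_of_arc_of_not_isRetic (hv : ¬ IsRetic N v) {a b : V} (ha : N.Arc a v)
    (hb : N.Arc b v) : a = b :=
  (inDeg_eq_one_iff.1 (inDeg_eq_one_of_not_isRetic (ne_root_of_arc ha) hv)).unique ha hb

end PhyloNet

namespace IsRetic

lemma ne_root (h : IsRetic N v) : v ≠ N.root := by
  rintro rfl
  have := inDeg_eq_zero_iff.2 N.not_arc_root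
  unfold IsRetic at h
  omega

lemma notMem_X (h : IsRetic N v) : v ∉ N.X := by
  intro hx
  have := N.leaf_in v hx
  unfold IsRetic at h
  omega

lemma outDeg_eq_one (h : IsRetic N v) : outDeg N.Arc v = 1 := by
  rcases N.internal v h.ne_root h.notMem_X with ⟨h1, _⟩ | ⟨_, h2⟩
  · unfold IsRetic at h
    omega
  · exact h2

lemma eq_of_arc (h : IsRetic N u) {a b : V} (ha : N.Arc u a) (hb : N.Arc u b) : a = b :=
  (outDeg_eq_one_iff.1 h.outDeg_eq_one).unique ha hb

end IsRetic

lemma not_arborealArc_iff (h : N.Arc u v) :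
    ¬ ArborealArc N u v ↔ ¬ IsRetic N u ∧ IsRetic N v := by
  simp [ArborealArc, h]

lemma Qt.not_isRetic (h : Qt N v) : ¬ IsRetic N v := by
  obtain ⟨r, hr, hrt⟩ := h
  exact hrt.2 v hr

lemma isSupportTree_iff {T : V → V → Prop} :
    IsSupportTree N T ↔ (∀ u v, T u v → N.Arc u v) ∧ (∀ v, v ≠ N.root → ∃! u, T u v) ∧
      ∀ v ∉ N.X, ∃ c, T v c := by
  constructor
  · rintro ⟨⟨hsub, -, hin⟩, hleaf⟩
    refine ⟨hsub, fun v hv => inDeg_eq_one_iff.1 (hin v hv), fun v hv => ?_⟩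
    by_contra! h
    exact hv (hleaf v (outDeg_eq_zero_iff.2 h))
  · rintro ⟨hsub, hpar, hchild⟩
    have hin : ∀ v, v ≠ N.root → inDeg T v = 1 := fun v hv => inDeg_eq_one_iff.2 (hpar v hv)
    refine ⟨⟨hsub, fun v => ⟨fun h0 => ?_, ?_⟩, hin⟩, fun v h0 => ?_⟩
    · by_contra hv
      rw [hin v hv] at h0
      exact one_ne_zero h0
    · rintro rfl
      exact inDeg_eq_zero_iff.2 fun u h => N.not_arc_root u (hsub u _ h)
    · by_contra hv
      obtain ⟨c, hc⟩ := hchild v hv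
      exact outDeg_eq_zero_iff.1 h0 c hc

namespace IsSupportTree
variable {T : V → V → Prop} (hT : IsSupportTree N T)
include hT

lemma eq_of_arc {a b : V} (ha : T a v) (hb : T b v) : a = b :=
  ((isSupportTree_iff.1 hT).2.1 v (PhyloNet.ne_root_of_arc (hT.1.1 a v ha))).unique ha hb

lemma arc_of_not_isRetic (hv : ¬ IsRetic N v) (h : N.Arc u v) : T u v := by
  obtain ⟨w, hw, -⟩ := (isSupportTree_iff.1 hT).2.1 v (PhyloNet.ne_root_of_arc h)
  rwa [PhyloNet.eq_of_arc_of_not_isRetic hv (hT.1.1 w v hw) h] at hw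

lemma arc_of_isRetic (hu : IsRetic N u) (h : N.Arc u v) : T u v := by
  obtain ⟨w, hw⟩ := (isSupportTree_iff.1 hT).2.2 u hu.notMem_X
  rwa [hu.eq_of_arc (hT.1.1 u w hw) h] at hw

lemma arc_of_arboreal (h : ArborealArc N u v) : T u v :=
  h.2.elim (hT.arc_of_isRetic · h.1) (hT.arc_of_not_isRetic · h.1)

lemma rt_of_arc (h : T u v) (hu : ¬ IsRetic N u) (hv : IsRetic N v) : Rt N v :=
  ⟨hv, fun _ hp hpr => hu (hT.eq_of_arc (hT.arc_of_isRetic hpr hp) h ▸ hpr)⟩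

end IsSupportTree

namespace TreeBased
variable (hN : TreeBased N)
include hN

lemma eq_of_arc_of_isRetic {p₁ p₂ : V} (h₁ : N.Arc p₁ v) (h₂ : N.Arc p₂ v)
    (hr₁ : IsRetic N p₁) (hr₂ : IsRetic N p₂) : p₁ = p₂ := by
  obtain ⟨T, hT⟩ := hN
  exact hT.eq_of_arc (hT.arc_of_isRetic hr₁ h₁) (hT.arc_of_isRetic hr₂ h₂)

lemma qt_of_isOmnian (ho : IsOmnian N v) (hv : ¬ IsRetic N v) : Qt N v := by
  obtain ⟨T, hT⟩ := hN
  obtain ⟨c, hc⟩ := (isSupportTree_iff.1 hT).2.2 v ho.1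
  have hvc := hT.1.1 v c hc
  exact ⟨c, hvc, hT.rt_of_arc hc hv (ho.2 c hvc)⟩

end TreeBased

open Classical in
lemma IsSupportTree.isSupportingSet_filter_not_arborealArc {A' : Finset (V × V)}
    (hT : IsSupportTree N (fun u v => (u, v) ∈ A')) :
    IsSupportingSet N {e ∈ A' | ¬ ArborealArc N e.1 e.2} := by
  have hA' := isSupportTree_iff.1 hT
  refine ⟨fun e he => ?_, fun q hq ho => ?_, fun r hr => ?_⟩
  · obtain ⟨heA, hna⟩ := Finset.mem_filter.1 he
    have harc := hT.1.1 _ _ heA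
    obtain ⟨hu, hv⟩ := (not_arborealArc_iff harc).1 hna
    have hrt := hT.rt_of_arc heA hu hv
    exact ⟨⟨e.2, harc, hrt⟩, hrt, harc⟩
  · obtain ⟨c, hc⟩ := hA'.2.2 q ho.1
    have harc := hT.1.1 q c hc
    refine ⟨(q, c), Finset.mem_filter.2 ⟨hc, ?_⟩, rfl⟩
    exact (not_arborealArc_iff harc).2 ⟨hq.not_isRetic, ho.2 c harc⟩
  · obtain ⟨a, ha, -⟩ := hA'.2.1 r hr.1.ne_root
    have harc := hT.1.1 a r ha
    have hna := (not_arborealArc_iff harc).2 ⟨hr.2 a harc, hr.1⟩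
    refine ⟨(a, r), ⟨Finset.mem_filter.2 ⟨ha, hna⟩, rfl⟩, ?_⟩
    rintro ⟨b, s⟩ ⟨he, rfl⟩
    rw [hT.eq_of_arc (Finset.mem_filter.1 he).1 ha]

section ArborealUnion
variable {E : Finset (V × V)}

lemma existsUnique_arboreal_union_parent (hN : TreeBased N) (hE : IsSupportingSet N E)
    (hv : v ≠ N.root) : ∃! u, ArborealArc N u v ∨ (u, v) ∈ E := by
  by_cases hr : IsRetic N v
  · by_cases hrt : Rt N v
    · obtain ⟨⟨a, r⟩, ⟨ha, rfl⟩, huniq⟩ := hE.2.2 v hrt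
      refine ⟨a, Or.inr ha, fun u hu => ?_⟩
      rcases hu with ⟨harc, hu | hu⟩ | hu
      · exact absurd hu (hrt.2 u harc)
      · exact absurd hr hu
      · exact congrArg Prod.fst (huniq (u, r) ⟨hu, rfl⟩)
    · obtain ⟨p, hp, hpr⟩ : ∃ p, N.Arc p v ∧ IsRetic N p := by
        by_contra! h
        exact hrt ⟨hr, h⟩
      refine ⟨p, Or.inl ⟨hp, Or.inl hpr⟩, fun u hu => ?_⟩
      rcases hu with ⟨harc, hu | hu⟩ | hu
      · exact hN.eq_of_arc_of_isRetic harc hp hu hpr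
      · exact absurd hr hu
      · exact absurd (hE.1 _ hu).2.1 hrt
  · obtain ⟨a, ha, huniq⟩ := inDeg_eq_one_iff.1 (PhyloNet.inDeg_eq_one_of_not_isRetic hv hr)
    refine ⟨a, Or.inl ⟨ha, Or.inr hr⟩, fun u hu => huniq u ?_⟩
    rcases hu with hu | hu
    · exact hu.1
    · exact absurd (hE.1 _ hu).2.1.1 hr

lemma exists_arboreal_union_child (hN : TreeBased N) (hE : IsSupportingSet N E)
    (hv : v ∉ N.X) : ∃ c, ArborealArc N v c ∨ (v, c) ∈ E := by
  by_cases hr : IsRetic N v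
  · obtain ⟨c, hc⟩ := PhyloNet.exists_arc_of_notMem_X hv
    exact ⟨c, Or.inl ⟨hc, Or.inl hr⟩⟩
  by_cases hall : ∀ c, N.Arc v c → IsRetic N c
  · obtain ⟨⟨q, c⟩, he, rfl⟩ := hE.2.1 v (hN.qt_of_isOmnian ⟨hv, hall⟩ hr) ⟨hv, hall⟩
    exact ⟨c, Or.inr he⟩
  · push Not at hall
    obtain ⟨c, hc, hcr⟩ := hall
    exact ⟨c, Or.inl ⟨hc, Or.inr hcr⟩⟩

lemma isSupportTree_arboreal_union (hN : TreeBased N) (hE : IsSupportingSet N E) :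
    IsSupportTree N (fun u v => ArborealArc N u v ∨ (u, v) ∈ E) :=
  isSupportTree_iff.2
    ⟨fun _ _ h => h.elim (·.1) (fun he => (hE.1 _ he).2.2),
      fun _ hv => existsUnique_arboreal_union_parent hN hE hv,
      fun _ hv => exists_arboreal_union_child hN hE hv⟩

end ArborealUnion

end Network

theorem stmt16_general {V : Type*} [Fintype V] [DecidableEq V] (N : PhyloNet V)
    (hN : TreeBased N) (A' : Finset (V × V)) :
    IsSupportTree N (fun u v => (u, v) ∈ A') ↔
      ∃ E : Finset (V × V), IsSupportingSet N E ∧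
        ∀ e : V × V, e ∈ A' ↔ (ArborealArc N e.1 e.2 ∨ e ∈ E) := by
  constructor
  · intro hT
    refine ⟨_, hT.isSupportingSet_filter_not_arborealArc, fun e => ?_⟩
    by_cases h : ArborealArc N e.1 e.2
    · simpa [h] using hT.arc_of_arboreal h
    · simp [h]
  · rintro ⟨E, hE, hA'⟩
    have hT : (fun u v => (u, v) ∈ A') = fun u v => ArborealArc N u v ∨ (u, v) ∈ E := by
      funext u v
      exact propext (hA' (u, v))
    exact hT ▸ isSupportTree_arboreal_union hN hE

/-- a subset `A'` of the arcs of a tree-based network `N` is the arc set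
of a support tree iff it is the union of the arboreal arcs with a supporting set of `J_N`. -/
theorem stmt16 {V : Type*} [Fintype V] [DecidableEq V] (N : PhyloNet V)
    (hN : TreeBased N) (A' : Finset (V × V)) (hsub : ∀ e ∈ A', N.Arc e.1 e.2) :
    IsSupportTree N (fun u v => (u, v) ∈ A') ↔
      ∃ E : Finset (V × V), IsSupportingSet N E ∧
        ∀ e : V × V, e ∈ A' ↔ (ArborealArc N e.1 e.2 ∨ e ∈ E) :=
  stmt16_general N hN A'
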